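/- arXiv:0807.1078 — 2 statements merged into one kernel-verified Lean document; each statement's English description precedes it below -/
import Mathlib

section
/- Let γ be an E-linear ring endomorphism of E[[π]] with γ(π) ∈ π·E[[π]] and γ(π)/π ≡ c mod π·E[[π]] for some c ∈ Z_p^× satisfying c^n ≠ 1 for every integer n ≥ 1. Then for every f ∈ 1 + π·E[[π]] there exists a unique h ∈ 1 + π·E[[π]] such that γ(h) = f·h. -/
/-!
Coefficientwise, `γ h = ∑ hₘ γ(π)ᵐ` and `γ(π)ᵐ` starts in degree `m` with leading coefficient `cᵐ`,
while `f` starts with `1`. Hence the `n`-th coefficient of `γ h - f h` is `(cⁿ - 1) hₙ` minus a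
linear combination of `h₀, …, hₙ₋₁`: the equation is a lower triangular system whose diagonal
entries `cⁿ - 1` (`n ≥ 1`) are nonzero, so it has exactly one solution with `h₀ = 1`.
-/

open PowerSeries Finset

namespace PowerSeries

variable {R : Type*} [CommRing R]

lemma coeff_pow_self_of_constantCoeff_eq_zero {u : R⟦X⟧} (hu : constantCoeff u = 0) (n : ℕ) :
    coeff n (u ^ n) = coeff 1 u ^ n := by
  obtain ⟨v, rfl⟩ := X_dvd_iff.2 hu
  simp [mul_pow, coeff_X_pow_mul']

variable {γ : R⟦X⟧ →+* R⟦X⟧} (hγC : ∀ a : R, γ (C a) = C a) (hγX : constantCoeff (γ X) = 0)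
include hγC hγX

/- `γ` need not be continuous: it suffices that `γ (X ^ (n + 1) * g)` is divisible by
`X ^ (n + 1)`, so that `γ h` and `γ (trunc (n + 1) h)` agree up to degree `n`. -/
lemma coeff_ringHom_apply (h : R⟦X⟧) (n : ℕ) :
    coeff n (γ h) = ∑ m ∈ range (n + 1), coeff m h * coeff n (γ X ^ m) := by
  have htail (g : R⟦X⟧) : coeff n (γ (X ^ (n + 1) * g)) = 0 := by
    rw [map_mul, map_pow]
    exact X_pow_dvd_iff.1 (dvd_mul_of_dvd_left (pow_dvd_pow_of_dvd (X_dvd_iff.2 hγX) _) _) n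
      n.lt_succ_self
  have hCX : γ.comp C = C := RingHom.ext hγC
  conv_lhs => rw [eq_X_pow_mul_shift_add_trunc (n + 1) h]
  rw [map_add, map_add, htail, zero_add, ← Polynomial.eval₂_C_X_eq_coe, Polynomial.hom_eval₂, hCX,
    eval₂_trunc_eq_sum_range, map_sum]
  simp_rw [coeff_C_mul]

lemma coeff_ringHom_apply_sub_mul {f : R⟦X⟧} (hf : constantCoeff f = 1) (h : R⟦X⟧) (n : ℕ) :
    coeff n (γ h - f * h) = (coeff 1 (γ X) ^ n - 1) * coeff n h -
      ∑ m ∈ range n, coeff m h * (coeff (n - m) f - coeff n (γ X ^ m)) := by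
  rw [map_sub, coeff_ringHom_apply hγC hγX, sum_range_succ,
    coeff_pow_self_of_constantCoeff_eq_zero hγX, mul_comm f, coeff_mul,
    Nat.sum_antidiagonal_eq_sum_range_succ_mk, sum_range_succ]
  simp only [Nat.sub_self, coeff_zero_eq_constantCoeff, hf, mul_sub, sum_sub_distrib]
  ring

lemma ringHom_apply_eq_mul_iff {f : R⟦X⟧} (hf : constantCoeff f = 1) (h : R⟦X⟧) :
    γ h = f * h ↔ ∀ n, 0 < n → (coeff 1 (γ X) ^ n - 1) * coeff n h =
      ∑ m ∈ range n, coeff m h * (coeff (n - m) f - coeff n (γ X ^ m)) := by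
  rw [← sub_eq_zero, PowerSeries.ext_iff]
  simp only [coeff_ringHom_apply_sub_mul hγC hγX hf, map_zero, sub_eq_zero]
  refine ⟨fun H n _ => H n, fun H n => ?_⟩
  rcases n.eq_zero_or_pos with rfl | hn
  · simp
  · exact H n hn

end PowerSeries

section TriangularSystem

variable {K : Type*} [Field K] (a : ℕ → K) (b : ℕ → ℕ → K)

noncomputable def triangularSolution : ℕ → K
  | 0 => 1
  | n + 1 => (∑ m : Fin (n + 1), triangularSolution m * b (n + 1) m) / a (n + 1)

@[simp]
lemma triangularSolution_zero : triangularSolution a b 0 = 1 := by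
  rw [triangularSolution]

variable {a}

lemma mul_triangularSolution (ha : ∀ n, 0 < n → a n ≠ 0) {n : ℕ} (hn : 0 < n) :
    a n * triangularSolution a b n = ∑ m ∈ range n, triangularSolution a b m * b n m := by
  cases n with
  | zero => cases hn
  | succ n =>
    rw [triangularSolution, mul_div_cancel₀ _ (ha _ hn),
      Fin.sum_univ_eq_sum_range (fun m => triangularSolution a b m * b (n + 1) m)]

lemma eq_triangularSolution (ha : ∀ n, 0 < n → a n ≠ 0) {x : ℕ → K} (h0 : x 0 = 1)
    (hx : ∀ n, 0 < n → a n * x n = ∑ m ∈ range n, x m * b n m) :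
    x = triangularSolution a b := by
  funext n
  induction n using Nat.strong_induction_on with
  | _ n ih =>
    rcases n.eq_zero_or_pos with rfl | hn
    · rw [h0, triangularSolution_zero]
    · refine mul_left_cancel₀ (ha n hn) ?_
      rw [hx n hn, mul_triangularSolution b ha hn]
      exact sum_congr rfl fun m hm => by rw [ih m (mem_range.1 hm)]

theorem PowerSeries.existsUnique_of_triangular (ha : ∀ n, 0 < n → a n ≠ 0) :
    ∃! h : K⟦X⟧, constantCoeff h = 1 ∧
      ∀ n, 0 < n → a n * coeff n h = ∑ m ∈ range n, coeff m h * b n m := by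
  refine ⟨mk (triangularSolution a b),
    ⟨by simp, fun n hn => by simpa using mul_triangularSolution b ha hn⟩, ?_⟩
  rintro h ⟨h0, hh⟩
  ext n
  rw [coeff_mk, ← eq_triangularSolution b ha (x := fun n => coeff n h) (by simpa using h0) hh]

end TriangularSystem

theorem stmt7_general
    (p : ℕ) [Fact (Nat.Prime p)]
    (E : Type*) [Field E] [Algebra ℚ_[p] E]
    -- γ : an E-linear ring endomorphism of E[[π]]
    (γ : PowerSeries E →+* PowerSeries E)
    (hγC : ∀ c : E, γ (C c) = C c)
    -- c ∈ Z_p^× with c^n ≠ 1 for all n ≥ 1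
    (c : ℤ_[p]ˣ) (hc : ∀ n : ℕ, 1 ≤ n → ((c : ℤ_[p]) : ℚ_[p]) ^ n ≠ 1)
    -- γ(π) ∈ π·E[[π]] and γ(π)/π ≡ c mod π·E[[π]]
    (hγX0 : constantCoeff (γ X) = 0)
    (hγX1 : coeff 1 (γ X) = algebraMap ℚ_[p] E ((c : ℤ_[p]) : ℚ_[p]))
    -- the statement
    (f : PowerSeries E) (hf : constantCoeff f = 1) :
    ∃! h : PowerSeries E, constantCoeff h = 1 ∧ γ h = f * h := by
  have hpow : ∀ n, 0 < n → coeff 1 (γ X) ^ n - 1 ≠ 0 := fun n hn => by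
    rw [hγX1, ← map_pow, sub_ne_zero, ← map_one (algebraMap ℚ_[p] E),
      (algebraMap ℚ_[p] E).injective.ne_iff]
    exact hc n hn
  simp_rw [ringHom_apply_eq_mul_iff hγC hγX0 hf]
  exact existsUnique_of_triangular _ hpow

theorem stmt7
    (p : ℕ) [Fact (Nat.Prime p)]
    (E : Type*) [Field E] [Algebra ℚ_[p] E] [FiniteDimensional ℚ_[p] E]
    -- γ : an E-linear ring endomorphism of E[[π]]
    (γ : PowerSeries E →+* PowerSeries E)
    (hγC : ∀ c : E, γ (C c) = C c)
    -- c ∈ Z_p^× with c^n ≠ 1 for all n ≥ 1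
    (c : ℤ_[p]ˣ) (hc : ∀ n : ℕ, 1 ≤ n → ((c : ℤ_[p]) : ℚ_[p]) ^ n ≠ 1)
    -- γ(π) ∈ π·E[[π]] and γ(π)/π ≡ c mod π·E[[π]]
    (hγX0 : constantCoeff (γ X) = 0)
    (hγX1 : coeff 1 (γ X) = algebraMap ℚ_[p] E ((c : ℤ_[p]) : ℚ_[p]))
    -- the statement
    (f : PowerSeries E) (hf : constantCoeff f = 1) :
    ∃! h : PowerSeries E, constantCoeff h = 1 ∧ γ h = f * h :=
  stmt7_general p E γ hγC c hc hγX0 hγX1 f hf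
end

section
/- Let a ≥ 1 and let P_0, …, P_{a−1} ∈ M_{d×d}(E[[π]]) be matrices invertible over E[[π]], and G_0, …, G_{a−1} ∈ M_{d×d}(E[[π]]) (indices taken in Z/aZ). For j ∈ Z/aZ set P_{(j)} := P_{j+1}·φ(P_{j+2})·φ²(P_{j+3})·⋯·φ^{a−1}(P_{j+a}), where subscripts are taken mod a (so the last factor is φ^{a−1}(P_j)). Fix j₀ ∈ Z/aZ. Then the following are equivalent: (1) G_{j−1}·γ(P_j) = P_j·φ(G_j) holds for every j ∈ Z/aZ; (2) G_{j−1}·γ(P_j) = P_j·φ(G_j) holds for every j ∈ Z/aZ with j ≠ j₀, and G_{j₀}·γ(P_{(j₀)}) = P_{(j₀)}·φ^a(G_{j₀}). -/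
/-!
Applying `φ^l` to the relation at `j₀ + 1 + l` (using `γ φ = φ γ`) and multiplying these for
`l = 0, …, a - 1` telescopes to the relation for `P_{(j₀)}` and `φ^a`. Conversely, the relations
at `j ≠ j₀` telescope in the same way over the first `a - 1` factors; cancelling that invertible
partial product from the relation for `P_{(j₀)}` leaves `φ^{a-1}` applied to the relation at `j₀`,
and `φ` is injective because `φ(π)` has order exactly `1`, its linear coefficient being `p ≠ 0`.
-/

open PowerSeries

namespace PowerSeries

variable {R : Type*} [CommRing R]

theorem coeff_self_pow_of_constantCoeff_eq_zero {g : R⟦X⟧} (hg : constantCoeff g = 0) (n : ℕ) :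
    coeff n (g ^ n) = coeff 1 g ^ n := by
  obtain ⟨w, rfl⟩ := X_dvd_iff.mpr hg
  rw [mul_pow, coeff_X_pow_mul', if_pos le_rfl, Nat.sub_self, coeff_zero_eq_constantCoeff,
    map_pow, coeff_succ_X_mul, coeff_zero_eq_constantCoeff]

theorem trunc_succ_of_coeff_eq_zero {f : R⟦X⟧} {n : ℕ} (hf : ∀ m < n, coeff m f = 0) :
    (trunc (n + 1) f : R⟦X⟧) = C (coeff n f) * X ^ n := by
  ext m
  rw [Polynomial.coeff_coe, coeff_trunc, coeff_C_mul_X_pow]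
  split_ifs with h1 h2 h2
  · rw [h2]
  · exact hf m (by omega)
  · omega
  · rfl

theorem injective_of_coeff_one_map_X_ne_zero [NoZeroDivisors R] (φ : R⟦X⟧ →+* R⟦X⟧)
    (hC : ∀ c : R, φ (C c) = C c) (hX0 : constantCoeff (φ X) = 0) (hX1 : coeff 1 (φ X) ≠ 0)
    (htrunc : ∀ (f : R⟦X⟧) (n : ℕ), coeff n (φ f) = coeff n (φ (trunc (n + 1) f : R⟦X⟧))) :
    Function.Injective φ := by
  refine (injective_iff_map_eq_zero φ).2 fun f hf => ext fun n => ?_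
  induction n using Nat.strong_induction_on with
  | _ n ih =>
    have h := htrunc f n
    rw [hf, trunc_succ_of_coeff_eq_zero ih, map_mul, map_pow, hC, coeff_C_mul,
      coeff_self_pow_of_constantCoeff_eq_zero hX0, map_zero] at h
    exact (mul_eq_zero.1 h.symm).resolve_right (pow_ne_zero n hX1)

theorem coeff_one_one_add_X_pow_sub_one (p : ℕ) :
    coeff 1 ((1 + X : R⟦X⟧) ^ p - 1) = (p : R) := by
  rw [show (1 + X : R⟦X⟧) ^ p - 1 = (((1 + Polynomial.X) ^ p - 1 : Polynomial R) : R⟦X⟧) by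
    push_cast; rfl, Polynomial.coeff_coe]
  simp [Polynomial.coeff_one_add_X_pow, Polynomial.coeff_one]

theorem injective_of_map_X_eq_one_add_X_pow_sub_one [NoZeroDivisors R] [CharZero R] {p : ℕ}
    (hp : p ≠ 0) (φ : R⟦X⟧ →+* R⟦X⟧) (hC : ∀ c : R, φ (C c) = C c)
    (hX : φ X = (1 + X) ^ p - 1)
    (htrunc : ∀ (f : R⟦X⟧) (n : ℕ), coeff n (φ f) = coeff n (φ (trunc (n + 1) f : R⟦X⟧))) :
    Function.Injective φ :=
  injective_of_coeff_one_map_X_ne_zero φ hC (by simp [hX])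
    (by rw [hX, coeff_one_one_add_X_pow_sub_one]; exact_mod_cast hp) htrunc

end PowerSeries

theorem Matrix.map_iterate {m n α : Type*} (f : α → α) (A : Matrix m n α) (k : ℕ) :
    (fun B : Matrix m n α => B.map f)^[k] A = A.map f^[k] := by
  induction k with
  | zero => rfl
  | succ k ih => rw [Function.iterate_succ_apply', ih, Matrix.map_map, ← Function.iterate_succ']

theorem ZMod.add_one_add_natCast_ne_self {n l : ℕ} (hl : l + 1 < n) (j : ZMod n) :
    j + 1 + l ≠ j := by
  intro h
  have h0 : ((l + 1 : ℕ) : ZMod n) = 0 := by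
    push_cast
    linear_combination h
  rw [ZMod.natCast_eq_zero_iff] at h0
  exact Nat.not_dvd_of_pos_of_lt l.succ_pos hl h0

theorem ZMod.add_one_add_natCast_self (k : ℕ) (j : ZMod (k + 1)) : j + 1 + k = j := by
  rw [add_assoc, add_comm 1, ZMod.natCast_self', add_zero]

section TwistedProduct

variable {M : Type*} [Monoid M] (σ : Monoid.End M)

def twistedProd (Q : ℕ → M) (k : ℕ) : M :=
  (List.ofFn fun l : Fin k => (σ ^ (l : ℕ)) (Q l)).prod

variable {σ} {Q : ℕ → M}

theorem twistedProd_succ (k : ℕ) :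
    twistedProd σ Q (k + 1) = twistedProd σ Q k * (σ ^ k) (Q k) := by
  simp only [twistedProd, List.ofFn_succ', List.prod_concat]
  rfl

theorem isUnit_twistedProd {k : ℕ} (hQ : ∀ l < k, IsUnit (Q l)) :
    IsUnit (twistedProd σ Q k) := by
  induction k with
  | zero => exact isUnit_one
  | succ k ih =>
    rw [twistedProd_succ]
    exact (ih fun l hl => hQ l (by omega)).mul ((hQ k k.lt_succ_self).map _)

variable {γ : Monoid.End M} {H : ℕ → M}

theorem pow_apply_mul_apply_pow_apply (hσγ : Commute σ γ) (k : ℕ) (x y : M) :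
    (σ ^ k) x * γ ((σ ^ k) y) = (σ ^ k) (x * γ y) := by
  rw [map_mul]
  exact congrArg _ (DFunLike.congr_fun (hσγ.pow_left k).eq.symm y)

theorem pow_apply_mul_pow_succ_apply (k : ℕ) (x y : M) :
    (σ ^ k) x * (σ ^ (k + 1)) y = (σ ^ k) (x * σ y) := by
  rw [map_mul, pow_succ, Monoid.End.coe_mul, Function.comp_apply]

theorem mul_twistedProd_eq_twistedProd_mul (hσγ : Commute σ γ) {k : ℕ}
    (h : ∀ l < k, H l * γ (Q l) = Q l * σ (H (l + 1))) :
    H 0 * γ (twistedProd σ Q k) = twistedProd σ Q k * (σ ^ k) (H k) := by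
  induction k with
  | zero => simp [twistedProd]
  | succ k ih =>
    rw [twistedProd_succ, map_mul, ← mul_assoc, ih fun l hl => h l (by omega), mul_assoc,
      pow_apply_mul_apply_pow_apply hσγ, h k k.lt_succ_self, ← pow_apply_mul_pow_succ_apply,
      mul_assoc]

theorem eq_of_mul_twistedProd_succ (hσγ : Commute σ γ) (hσ : Function.Injective σ) {k : ℕ}
    (hQ : ∀ l < k, IsUnit (Q l)) (h : ∀ l < k, H l * γ (Q l) = Q l * σ (H (l + 1)))
    (hk : H 0 * γ (twistedProd σ Q (k + 1)) =
      twistedProd σ Q (k + 1) * (σ ^ (k + 1)) (H (k + 1))) :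
    H k * γ (Q k) = Q k * σ (H (k + 1)) := by
  rw [twistedProd_succ, map_mul, ← mul_assoc, mul_twistedProd_eq_twistedProd_mul hσγ h, mul_assoc,
    mul_assoc, (isUnit_twistedProd hQ).mul_right_inj, pow_apply_mul_apply_pow_apply hσγ,
    pow_apply_mul_pow_succ_apply] at hk
  exact hσ.iterate k hk

theorem forall_mul_apply_eq_iff_forall_ne_and_twistedProd (hσγ : Commute σ γ)
    (hσ : Function.Injective σ) {a : ℕ} [NeZero a] (P G : ZMod a → M) (hP : ∀ j, IsUnit (P j))
    (j₀ : ZMod a) :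
    (∀ j, G (j - 1) * γ (P j) = P j * σ (G j)) ↔
      ((∀ j, j ≠ j₀ → G (j - 1) * γ (P j) = P j * σ (G j)) ∧
        G j₀ * γ (twistedProd σ (fun l => P (j₀ + 1 + l)) a) =
          twistedProd σ (fun l => P (j₀ + 1 + l)) a * (σ ^ a) (G j₀)) := by
  have hrel (l : ℕ) : G (j₀ + l) * γ (P (j₀ + 1 + l)) = P (j₀ + 1 + l) * σ (G (j₀ + (l + 1 : ℕ)))
      ↔ G (j₀ + 1 + l - 1) * γ (P (j₀ + 1 + l)) = P (j₀ + 1 + l) * σ (G (j₀ + 1 + l)) := by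
    rw [show j₀ + 1 + (l : ZMod a) - 1 = j₀ + l by ring,
      show j₀ + ((l + 1 : ℕ) : ZMod a) = j₀ + 1 + l by push_cast; ring]
  obtain ⟨k, rfl⟩ : ∃ k, k + 1 = a := ⟨a - 1, Nat.succ_pred_eq_of_pos (NeZero.pos a)⟩
  have hcycle (j : ZMod (k + 1)) : G (j + (k + 1 : ℕ)) = G j := by
    rw [ZMod.natCast_self, add_zero]
  refine ⟨fun h => ⟨fun j _ => h j, ?_⟩, fun ⟨hne, hj₀⟩ j => ?_⟩
  · have := mul_twistedProd_eq_twistedProd_mul (H := fun l => G (j₀ + l)) (k := k + 1) hσγ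
      fun l _ => (hrel l).2 (h _)
    rwa [Nat.cast_zero, add_zero, hcycle] at this
  rcases eq_or_ne j j₀ with rfl | hj
  · have := eq_of_mul_twistedProd_succ (H := fun l => G (j + l)) (k := k) hσγ hσ
      (fun l _ => hP _)
      (fun l hl => (hrel l).2 (hne _ (ZMod.add_one_add_natCast_ne_self (by omega) j)))
      (by rwa [Nat.cast_zero, add_zero, hcycle])
    rwa [hrel, ZMod.add_one_add_natCast_self] at this
  · exact hne j hj

end TwistedProduct

theorem stmt13_general
    (p : ℕ) [Fact (Nat.Prime p)]
    (E : Type*) [Field E] [Algebra ℚ_[p] E]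
    -- φ : the E-linear ring endomorphism of E[[π]] with φ(π) = (1+π)^p − 1
    (φ : PowerSeries E →+* PowerSeries E)
    (hφC : ∀ c : E, φ (C c) = C c)
    (hφX : φ X = (1 + X) ^ p - 1)
    (hφcont : ∀ (f : PowerSeries E) (n : ℕ),
      coeff n (φ f) = coeff n (φ ((trunc (n + 1) f : Polynomial E) : PowerSeries E)))
    -- γ and its properties
    (γ : PowerSeries E →+* PowerSeries E)
    (hγφ : γ.comp φ = φ.comp γ)
    -- the data
    (d : ℕ) (a : ℕ) [NeZero a]
    (P : ZMod a → Matrix (Fin d) (Fin d) (PowerSeries E))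
    (hP : ∀ j, IsUnit (P j).det)
    (G : ZMod a → Matrix (Fin d) (Fin d) (PowerSeries E))
    (j₀ : ZMod a) :
    (∀ j : ZMod a, G (j - 1) * (P j).map ⇑γ = P j * (G j).map ⇑φ) ↔
    ((∀ j : ZMod a, j ≠ j₀ → G (j - 1) * (P j).map ⇑γ = P j * (G j).map ⇑φ) ∧
      G j₀ *
        ((List.ofFn fun l : Fin a =>
            (P (j₀ + 1 + ((l : ℕ) : ZMod a))).map ((⇑φ)^[(l : ℕ)])).prod).map ⇑γ =
      (List.ofFn fun l : Fin a =>
          (P (j₀ + 1 + ((l : ℕ) : ZMod a))).map ((⇑φ)^[(l : ℕ)])).prod *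
        (G j₀).map ((⇑φ)^[a])) := by
  have : CharZero E := charZero_of_injective_algebraMap (algebraMap ℚ_[p] E).injective
  have hφ := injective_of_map_X_eq_one_add_X_pow_sub_one (Fact.out : p.Prime).ne_zero φ hφC hφX
    hφcont
  let σ : Monoid.End (Matrix (Fin d) (Fin d) E⟦X⟧) := φ.mapMatrix.toMonoidHom
  let γ' : Monoid.End (Matrix (Fin d) (Fin d) E⟦X⟧) := γ.mapMatrix.toMonoidHom
  have hσγ : Commute σ γ' :=
    DFunLike.ext _ _ fun A => Matrix.ext fun i j => (RingHom.congr_fun hγφ (A i j)).symm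
  have hmap (A : Matrix (Fin d) (Fin d) E⟦X⟧) (k : ℕ) : A.map (⇑φ)^[k] = (σ ^ k) A :=
    (Matrix.map_iterate φ A k).symm
  simp only [hmap]
  exact forall_mul_apply_eq_iff_forall_ne_and_twistedProd hσγ (Matrix.map_injective hφ) P G
    (fun j => (P j).isUnit_iff_isUnit_det.2 (hP j)) j₀

theorem stmt13
    (p : ℕ) [Fact (Nat.Prime p)]
    (E : Type*) [Field E] [Algebra ℚ_[p] E] [FiniteDimensional ℚ_[p] E]
    (Zp' : Subring E)
    (hZp' : Zp' = ((algebraMap ℚ_[p] E).comp (PadicInt.Coe.ringHom (p := p))).range)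
    -- φ : the E-linear ring endomorphism of E[[π]] with φ(π) = (1+π)^p − 1
    (φ : PowerSeries E →+* PowerSeries E)
    (hφC : ∀ c : E, φ (C c) = C c)
    (hφX : φ X = (1 + X) ^ p - 1)
    (hφcont : ∀ (f : PowerSeries E) (n : ℕ),
      coeff n (φ f) = coeff n (φ ((trunc (n + 1) f : Polynomial E) : PowerSeries E)))
    -- γ and its properties
    (γ : PowerSeries E →+* PowerSeries E)
    (hγC : ∀ c : E, γ (C c) = C c)
    (hγφ : γ.comp φ = φ.comp γ)
    (hγX0 : constantCoeff (γ X) = 0)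
    (hγXZp : ∀ n, coeff n (γ X) ∈ Zp')
    (χ : ℤ_[p]ˣ)
    (hγX1 : coeff 1 (γ X) = algebraMap ℚ_[p] E ((χ : ℤ_[p]) : ℚ_[p]))
    -- the data
    (d : ℕ) (a : ℕ) [NeZero a]
    (P : ZMod a → Matrix (Fin d) (Fin d) (PowerSeries E))
    (hP : ∀ j, IsUnit (P j).det)
    (G : ZMod a → Matrix (Fin d) (Fin d) (PowerSeries E))
    (j₀ : ZMod a) :
    (∀ j : ZMod a, G (j - 1) * (P j).map ⇑γ = P j * (G j).map ⇑φ) ↔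
    ((∀ j : ZMod a, j ≠ j₀ → G (j - 1) * (P j).map ⇑γ = P j * (G j).map ⇑φ) ∧
      G j₀ *
        ((List.ofFn fun l : Fin a =>
            (P (j₀ + 1 + ((l : ℕ) : ZMod a))).map ((⇑φ)^[(l : ℕ)])).prod).map ⇑γ =
      (List.ofFn fun l : Fin a =>
          (P (j₀ + 1 + ((l : ℕ) : ZMod a))).map ((⇑φ)^[(l : ℕ)])).prod *
        (G j₀).map ((⇑φ)^[a])) :=
  stmt13_general p E φ hφC hφX hφcont γ hγφ d a P hP G j₀
end
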